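/- Let R ⊆ R' be a finite extension of discrete valuation rings with fraction field extension K ⊆ K' separable, and let Δ^{-1} = {α ∈ K' : Tr_{K'/K}(α R') ⊆ R} be the inverse different. Then the R'-module map Δ^{-1} → Hom_R(R', R) sending α to the map x ↦ Tr_{K'/K}(αx) is an isomorphism of R'-modules. -/

import Mathlib

/-!
Write `S = R'` and `L = K'`. The trace form identifies `L` with its `K`-dual, and since `S` is
algebraic over `R` with fraction field `L`, the field `L` is the base change `K ⊗[R] S`, so
`K`-linear functionals on `L` are the same as `R`-linear maps `S → K`. Composing,
`α ↦ (x ↦ Tr(α x))` is a bijection `L ≃ (S →ₗ[R] K)`, and the inverse different is exactly the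
preimage of the maps with values in `R ⊆ K`.
-/

open Function

namespace LinearMap

variable {R M N P : Type*} [Semiring R] [AddCommMonoid M] [AddCommMonoid N] [AddCommMonoid P]
  [Module R M] [Module R N] [Module R P]

noncomputable def codLiftEquiv (k : P →ₗ[R] N) (hk : Injective k) :
    {f : M →ₗ[R] N // ∀ m, f m ∈ LinearMap.range k} ≃ (M →ₗ[R] P) where
  toFun f := f.1.codLift k hk f.2
  invFun φ := ⟨k ∘ₗ φ, fun m => ⟨φ m, rfl⟩⟩
  left_inv _ := Subtype.ext (comp_codLift ..)
  right_inv _ := ext fun m => hk (LinearMap.congr_fun (comp_codLift ..) m)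

theorem codLiftEquiv_apply (k : P →ₗ[R] N) (hk : Injective k)
    (f : {f : M →ₗ[R] N // ∀ m, f m ∈ LinearMap.range k}) (m : M) :
    k (codLiftEquiv k hk f m) = f.1 m :=
  LinearMap.congr_fun (comp_codLift f.1 k hk f.2) m

end LinearMap

section

variable {R S K L : Type*} [CommRing R] [CommRing S] [Field K] [Field L]
  [Algebra R S] [Algebra R K] [Algebra S L] [Algebra K L] [Algebra R L]
  [IsScalarTower R K L] [IsScalarTower R S L]

variable (R S K L) in
noncomputable def traceFunctional (α : L) : S →ₗ[R] K :=
  (Algebra.traceForm K L α).restrictScalars R ∘ₗ (IsScalarTower.toAlgHom R S L).toLinearMap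

variable [IsFractionRing R K] [IsFractionRing S L] [NoZeroDivisors S] [FaithfulSMul R S]
  [Algebra.IsAlgebraic R S] [FiniteDimensional K L] [Algebra.IsSeparable K L]

theorem traceFunctional_injective : Injective (traceFunctional R S K L) := fun _ _ h =>
  ((Algebra.traceForm K L).toDual (traceForm_nondegenerate K L)).injective <|
    (Algebra.IsAlgebraic.isBaseChange_of_isFractionRing R S K L).algHom_ext _ _
      (LinearMap.congr_fun h)

theorem traceFunctional_surjective : Surjective (traceFunctional R S K L) := by
  intro g
  have hbc := Algebra.IsAlgebraic.isBaseChange_of_isFractionRing R S K L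
  refine ⟨((Algebra.traceForm K L).toDual (traceForm_nondegenerate K L)).symm (hbc.lift g),
    LinearMap.ext fun x => ?_⟩
  rw [← hbc.lift_eq g x]
  exact LinearMap.BilinForm.apply_toDual_symm_apply (hB := traceForm_nondegenerate K L) _ _

end

theorem stmt9_general (R R' : Type*) [CommRing R] [IsDomain R]
    [CommRing R'] [IsDomain R']
    [Algebra R R'] [Module.Finite R R'] [FaithfulSMul R R']
    (K K' : Type*) [Field K] [Field K'] [Algebra R K] [IsFractionRing R K]
    [Algebra R' K'] [IsFractionRing R' K']
    [Algebra K K'] [Algebra R K'] [IsScalarTower R K K'] [IsScalarTower R R' K']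
    [FiniteDimensional K K'] [Algebra.IsSeparable K K'] :
    ∃ e : {α : K' // ∀ x : R',
        Algebra.trace K K' (α * algebraMap R' K' x) ∈ (algebraMap R K).range}
      ≃ (R' →ₗ[R] R),
      ∀ (α : {α : K' // ∀ x : R',
          Algebra.trace K K' (α * algebraMap R' K' x) ∈ (algebraMap R K).range})
        (x : R'),
        algebraMap R K ((e α) x) = Algebra.trace K K' (α.1 * algebraMap R' K' x) := by
  have hk : Injective (Algebra.linearMap R K) := IsFractionRing.injective R K
  let T := Equiv.ofBijective (traceFunctional R R' K K')
    ⟨traceFunctional_injective, traceFunctional_surjective⟩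
  exact ⟨(T.subtypeEquiv fun _ => Iff.rfl).trans (LinearMap.codLiftEquiv _ hk),
    fun α x => LinearMap.codLiftEquiv_apply _ hk _ x⟩

/-- Let `R ⊆ R'` be a finite extension of discrete valuation rings with fraction field
extension `K ⊆ K'` finite separable, and let
`Δ⁻¹ = {α ∈ K' : Tr_{K'/K}(α R') ⊆ R}` be the inverse different.  Then the `R'`-module
map `Δ⁻¹ → Hom_R(R', R)` sending `α` to `x ↦ Tr_{K'/K}(αx)` is an isomorphism of
`R'`-modules (here expressed as: there is a bijection `e` from `Δ⁻¹` onto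
`Hom_R(R', R)` satisfying the defining trace formula; such an `e` is unique and
automatically `R'`-linear). -/
theorem stmt9 (R R' : Type*) [CommRing R] [IsDomain R] [IsDiscreteValuationRing R]
    [CommRing R'] [IsDomain R'] [IsDiscreteValuationRing R']
    [Algebra R R'] [Module.Finite R R'] [FaithfulSMul R R']
    (K K' : Type*) [Field K] [Field K'] [Algebra R K] [IsFractionRing R K]
    [Algebra R' K'] [IsFractionRing R' K']
    [Algebra K K'] [Algebra R K'] [IsScalarTower R K K'] [IsScalarTower R R' K']
    [FiniteDimensional K K'] [Algebra.IsSeparable K K'] :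
    ∃ e : {α : K' // ∀ x : R',
        Algebra.trace K K' (α * algebraMap R' K' x) ∈ (algebraMap R K).range}
      ≃ (R' →ₗ[R] R),
      ∀ (α : {α : K' // ∀ x : R',
          Algebra.trace K K' (α * algebraMap R' K' x) ∈ (algebraMap R K).range})
        (x : R'),
        algebraMap R K ((e α) x) = Algebra.trace K K' (α.1 * algebraMap R' K' x) :=
  stmt9_general R R' K K'
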